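/- Let n ≥ 1 and let a₁, …, aₙ be strictly positive real numbers with ∏_{i=1}^n aᵢ = 1. Then ∫_{S^{n-1}} log(∑_{i=1}^n aᵢ uᵢ²) dσ(u) = 0 if and only if a₁ = a₂ = ⋯ = aₙ = 1, where σ is the uniform probability measure on the unit sphere S^{n-1} ⊂ ℝⁿ. -/

import Mathlib

open MeasureTheory Matrix Metric

/-- Borel measurable structure on real square matrices. -/
noncomputable instance matrixMeasurableSpace {n : ℕ} :
    MeasurableSpace (Matrix (Fin n) (Fin n) ℝ) := borel _

instance matrixBorelSpace {n : ℕ} : BorelSpace (Matrix (Fin n) (Fin n) ℝ) := ⟨rfl⟩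

/-- The spectral radius of a real square matrix: the maximum modulus of its complex
eigenvalues (elements of the spectrum of the matrix viewed over `ℂ`). -/
noncomputable def specRad {n : ℕ} (M : Matrix (Fin n) (Fin n) ℝ) : ℝ :=
  sSup ((fun z : ℂ => ‖z‖) '' spectrum ℂ (M.map (fun x => (x : ℂ))))

/-- The ℓ²-operator norm of a real square matrix (equal to its largest singular value). -/
noncomputable def opNorm {n : ℕ} (M : Matrix (Fin n) (Fin n) ℝ) : ℝ :=
  ‖Matrix.toEuclideanCLM (𝕜 := ℝ) M‖

/-- The uniform (rotation-invariant) probability measure on the unit sphere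
`S^{n-1} ⊆ ℝⁿ`: the normalization of the spherical measure induced by Lebesgue measure. -/
noncomputable def uniSphere (n : ℕ) :
    Measure (sphere (0 : EuclideanSpace ℝ (Fin n)) 1) :=
  ((volume : Measure (EuclideanSpace ℝ (Fin n))).toSphere Set.univ)⁻¹ •
    (volume : Measure (EuclideanSpace ℝ (Fin n))).toSphere

open Pointwise
local notation "E" n => EuclideanSpace ℝ (Fin n)
local notation "S" n => sphere (0 : EuclideanSpace ℝ (Fin n)) 1

section Aux
variable {n : ℕ}

lemma sum_sq_eq_one (u : S n) : ∑ i, ((u : E n) i) ^ 2 = 1 := by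
  have h : ‖(u : E n)‖ = 1 := by simpa using mem_sphere_zero_iff_norm.1 u.2
  have := EuclideanSpace.norm_eq (u : E n)
  rw [h] at this
  have h2 : ∑ i, ‖(u : E n) i‖ ^ 2 = 1 := by
    have := congrArg (· ^ 2) this.symm
    simpa [Real.sq_sqrt (Finset.sum_nonneg fun i _ => sq_nonneg _)] using this
  simpa [sq_abs, Real.norm_eq_abs] using h2

lemma cont_coord (i : Fin n) : Continuous fun u : S n => (u : E n) i :=
  (EuclideanSpace.proj (𝕜 := ℝ) i).continuous.comp continuous_subtype_val

lemma finrank_eq : Module.finrank ℝ (E n) = n := by simp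

lemma toSphere_univ_pos (hn : 1 ≤ n) :
    0 < (volume : Measure (E n)).toSphere Set.univ := by
  rw [Measure.toSphere_apply_univ]
  refine ENNReal.mul_pos ?_ ?_
  · simp [finrank_eq]; omega
  · exact (measure_ball_pos _ _ one_pos).ne'

lemma toSphere_univ_ne_top :
    (volume : Measure (E n)).toSphere Set.univ ≠ ⊤ :=
  (measure_lt_top _ _).ne

lemma uniSphere_def : True := trivial

lemma coord_null (i : Fin n) :
    (volume : Measure (E n)).toSphere {u : S n | (u : E n) i = 0} = 0 := by
  have hmeas : MeasurableSet {u : S n | (u : E n) i = 0} :=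
    (isClosed_eq (cont_coord i) continuous_const).measurableSet
  rw [Measure.toSphere_apply' _ hmeas]
  have hsub : Set.Ioo (0:ℝ) 1 • (Subtype.val '' {u : S n | (u : E n) i = 0}) ⊆
      ((LinearMap.ker (EuclideanSpace.proj (𝕜 := ℝ) i).toLinearMap : Submodule ℝ (EuclideanSpace ℝ (Fin n))) : Set (EuclideanSpace ℝ (Fin n))) := by
    rintro x hx
    obtain ⟨r, hr, y, ⟨u, hu, rfl⟩, rfl⟩ := hx
    simp only [SetLike.mem_coe, LinearMap.mem_ker]
    show (r • (u : EuclideanSpace ℝ (Fin n))) i = 0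
    simp [hu.out]
  have hker : (LinearMap.ker (EuclideanSpace.proj (𝕜 := ℝ) i).toLinearMap) ≠ ⊤ := by
    intro h
    have : EuclideanSpace.single i (1:ℝ) ∈ LinearMap.ker (EuclideanSpace.proj (𝕜 := ℝ) i).toLinearMap := h ▸ Submodule.mem_top
    simp at this
  have := Measure.addHaar_submodule (volume : Measure (E n)) _ hker
  simp [measure_mono_null hsub this]

/-- The map induced on the unit sphere by a linear isometry equivalence. -/
noncomputable def sphereMap (e : EuclideanSpace ℝ (Fin n) ≃ₗᵢ[ℝ] EuclideanSpace ℝ (Fin n)) :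
    (S n) → (S n) := fun u =>
  ⟨e u, by
    rw [mem_sphere_zero_iff_norm, e.norm_map]
    exact mem_sphere_zero_iff_norm.1 u.2⟩

lemma continuous_sphereMap (e : EuclideanSpace ℝ (Fin n) ≃ₗᵢ[ℝ] EuclideanSpace ℝ (Fin n)) :
    Continuous (sphereMap e) :=
  Continuous.subtype_mk (e.continuous.comp continuous_subtype_val) _

lemma sphereMap_comp (e : EuclideanSpace ℝ (Fin n) ≃ₗᵢ[ℝ] EuclideanSpace ℝ (Fin n)) (u : S n) :
    sphereMap e (sphereMap e.symm u) = u := Subtype.ext (by simp [sphereMap])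

lemma smul_preimage (e : EuclideanSpace ℝ (Fin n) ≃ₗᵢ[ℝ] EuclideanSpace ℝ (Fin n))
    (s : Set (S n)) :
    Set.Ioo (0:ℝ) 1 • (Subtype.val '' (sphereMap e ⁻¹' s)) =
      ⇑e ⁻¹' (Set.Ioo (0:ℝ) 1 • (Subtype.val '' s)) := by
  ext x
  constructor
  · rintro ⟨r, hr, y, ⟨u, hu, rfl⟩, rfl⟩
    refine ⟨r, hr, (sphereMap e u : EuclideanSpace ℝ (Fin n)), ⟨sphereMap e u, hu, rfl⟩, ?_⟩
    simp [sphereMap, _root_.map_smul]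
  · rintro ⟨r, hr, y, ⟨w, hw, rfl⟩, hx⟩
    refine ⟨r, hr, (sphereMap e.symm w : EuclideanSpace ℝ (Fin n)),
      ⟨sphereMap e.symm w, by simpa [sphereMap_comp] using hw, rfl⟩, ?_⟩
    have hx' : r • (w : EuclideanSpace ℝ (Fin n)) = e x := hx
    have : x = e.symm (r • (w : EuclideanSpace ℝ (Fin n))) := by
      rw [hx', e.symm_apply_apply]
    rw [this, _root_.map_smul]
    simp [sphereMap]

lemma set_aux_eq (s : Set (S n)) (r : Set.Ioi (0:ℝ)) :
    Subtype.val '' ((homeomorphUnitSphereProd (EuclideanSpace ℝ (Fin n))) ⁻¹'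
        (s ×ˢ Set.Iio r)) =
      Set.Ioo (0:ℝ) (r:ℝ) • (Subtype.val '' s) := by
  rw [← Set.image2_smul, Set.image2_image_right, ← Homeomorph.image_symm, Set.image_image,
    ← Set.image_subtype_val_Ioi_Iio, Set.image2_image_left, Set.image2_swap, ← Set.image_prod]
  rfl

lemma measurableSet_smul_Ioo (s : Set (S n)) (hs : MeasurableSet s) :
    MeasurableSet (Set.Ioo (0:ℝ) 1 • (Subtype.val '' s)) := by
  have hIio : MeasurableSet (Set.Iio (⟨1, Set.mem_Ioi.2 one_pos⟩ : Set.Ioi (0:ℝ))) := by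
    have h : Set.Iio (⟨1, Set.mem_Ioi.2 one_pos⟩ : Set.Ioi (0:ℝ))
        = Subtype.val ⁻¹' Set.Iio (1:ℝ) := rfl
    rw [h]
    exact (measurableSet_Iio (a := (1:ℝ))).preimage measurable_subtype_coe
  rw [show Set.Ioo (0:ℝ) 1 = Set.Ioo (0:ℝ) ((⟨1, Set.mem_Ioi.2 one_pos⟩ : Set.Ioi (0:ℝ)) : ℝ) from rfl,
    ← set_aux_eq]
  rw [← Homeomorph.image_symm, ← Set.image_comp]
  exact ((MeasurableEmbedding.subtype_coe (measurableSet_singleton (0 : EuclideanSpace ℝ (Fin n))).compl).comp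
    (Homeomorph.measurableEmbedding (homeomorphUnitSphereProd (EuclideanSpace ℝ (Fin n))).symm)).measurableSet_image.2
    (hs.prod hIio)

lemma measurePreserving_sphereMap (e : EuclideanSpace ℝ (Fin n) ≃ₗᵢ[ℝ] EuclideanSpace ℝ (Fin n)) :
    MeasurePreserving (sphereMap e) (volume : Measure (E n)).toSphere
      (volume : Measure (E n)).toSphere := by
  refine ⟨(continuous_sphereMap e).measurable, ?_⟩
  ext s hs
  rw [Measure.map_apply (continuous_sphereMap e).measurable hs,
    Measure.toSphere_apply' _ (hs.preimage (continuous_sphereMap e).measurable),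
    Measure.toSphere_apply' _ hs, smul_preimage,
    e.measurePreserving.measure_preimage (measurableSet_smul_Ioo s hs).nullMeasurableSet]

lemma isProb (hn : 1 ≤ n) : IsProbabilityMeasure (uniSphere n) := ⟨by
  rw [uniSphere, Measure.smul_apply, smul_eq_mul,
    ENNReal.inv_mul_cancel (toSphere_univ_pos hn).ne' toSphere_univ_ne_top]⟩

lemma uniSphere_coord_null (i : Fin n) : uniSphere n {u : S n | (u : E n) i = 0} = 0 := by
  simp [uniSphere, Measure.smul_apply, coord_null i]

lemma measurePreserving_sphereMap_uni (e : EuclideanSpace ℝ (Fin n) ≃ₗᵢ[ℝ] EuclideanSpace ℝ (Fin n)) :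
    MeasurePreserving (sphereMap e) (uniSphere n) (uniSphere n) := by
  refine ⟨(continuous_sphereMap e).measurable, ?_⟩
  rw [uniSphere, Measure.map_smul, (measurePreserving_sphereMap e).map_eq]

noncomputable def sphereHomeo (e : EuclideanSpace ℝ (Fin n) ≃ₗᵢ[ℝ] EuclideanSpace ℝ (Fin n)) :
    (S n) ≃ₜ (S n) where
  toFun := sphereMap e
  invFun := sphereMap e.symm
  left_inv u := Subtype.ext (by simp [sphereMap])
  right_inv u := sphereMap_comp e u
  continuous_toFun := continuous_sphereMap e
  continuous_invFun := continuous_sphereMap e.symm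

lemma integrable_cont (hn : 1 ≤ n) {f : (S n) → ℝ} (hf : Continuous f) :
    Integrable f (uniSphere n) := by
  haveI := isProb hn
  exact hf.integrable_of_hasCompactSupport (IsClosed.isCompact (isClosed_tsupport f))

lemma integral_coord_sq (hn : 1 ≤ n) (i : Fin n) :
    ∫ u : S n, ((u : E n) i) ^ 2 ∂(uniSphere n) = 1 / n := by
  haveI := isProb hn
  have hswap : ∀ j k : Fin n,
      (∫ u : S n, ((u : E n) j) ^ 2 ∂(uniSphere n)) =
        ∫ u : S n, ((u : E n) k) ^ 2 ∂(uniSphere n) := by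
    intro j k
    set e := LinearIsometryEquiv.piLpCongrLeft 2 ℝ ℝ (Equiv.swap j k) with he
    have happ : ∀ u : S n, ((sphereMap e u : E n)) j = (u : E n) k := by
      intro u
      show (e (u : E n)) j = (u : E n) k
      rw [LinearIsometryEquiv.piLpCongrLeft_apply]
      simp only [Equiv.piCongrLeft', Equiv.coe_fn_mk, Equiv.symm_symm_apply, Equiv.symm_swap]
      rw [Equiv.swap_apply_left]
    calc (∫ u : S n, ((u : E n) j) ^ 2 ∂(uniSphere n))
        = ∫ u : S n, ((sphereMap e u : E n) j) ^ 2 ∂(uniSphere n) :=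
          ((measurePreserving_sphereMap_uni e).integral_comp
            (sphereHomeo e).measurableEmbedding (fun v : S n => ((v : E n) j) ^ 2)).symm
      _ = ∫ u : S n, ((u : E n) k) ^ 2 ∂(uniSphere n) := by simp_rw [happ]
  have hsum : ∑ j : Fin n, (∫ u : S n, ((u : E n) j) ^ 2 ∂(uniSphere n)) = 1 := by
    rw [← integral_finset_sum _ (f := fun j (u : S n) => ((u : E n) j) ^ 2) (fun j _ => integrable_cont hn ((cont_coord j).pow 2))]
    simp_rw [sum_sq_eq_one]
    simp
  have h2 : (n : ℝ) * (∫ u : S n, ((u : E n) i) ^ 2 ∂(uniSphere n)) = 1 := by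
    calc (n : ℝ) * (∫ u : S n, ((u : E n) i) ^ 2 ∂(uniSphere n))
        = ∑ _j : Fin n, (∫ u : S n, ((u : E n) i) ^ 2 ∂(uniSphere n)) := by
          simp [Finset.card_univ, nsmul_eq_mul]
      _ = ∑ j : Fin n, (∫ u : S n, ((u : E n) j) ^ 2 ∂(uniSphere n)) :=
          Finset.sum_congr rfl fun j _ => (hswap j i).symm
      _ = 1 := hsum
  have hn0 : (0:ℝ) < n := by exact_mod_cast hn.trans_lt' (by norm_num)
  field_simp
  linarith

lemma log_jensen (a : Fin n → ℝ) (ha : ∀ i, 0 < a i) (u : S n) :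
    ∑ i, ((u : E n) i) ^ 2 * Real.log (a i) ≤ Real.log (∑ i, a i * ((u : E n) i) ^ 2) := by
  have h := strictConcaveOn_log_Ioi.concaveOn.le_map_sum (t := Finset.univ)
    (w := fun i => ((u : E n) i) ^ 2) (p := a) (fun i _ => sq_nonneg _)
    (sum_sq_eq_one u) (fun i _ => ha i)
  have hc : ∑ i, ((u : E n) i) ^ 2 • a i = ∑ i, a i * ((u : E n) i) ^ 2 :=
    Finset.sum_congr rfl fun i _ => by rw [smul_eq_mul, mul_comm]
  rw [hc] at h
  simpa [smul_eq_mul] using h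

lemma log_jensen_eq (a : Fin n → ℝ) (ha : ∀ i, 0 < a i) (u : S n)
    (hu : ∀ i, (u : E n) i ≠ 0)
    (heq : Real.log (∑ i, a i * ((u : E n) i) ^ 2) ≤ ∑ i, ((u : E n) i) ^ 2 * Real.log (a i)) :
    ∀ j k, a j = a k := by
  have h := strictConcaveOn_log_Ioi.eq_of_map_sum_eq (t := Finset.univ)
    (w := fun i => ((u : E n) i) ^ 2) (p := a)
    (fun i _ => by have := hu i; positivity)
    (sum_sq_eq_one u) (fun i _ => ha i) ?_
  · exact fun j k => h (Finset.mem_univ j) (Finset.mem_univ k)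
  · have hc : ∑ i, ((u : E n) i) ^ 2 • a i = ∑ i, a i * ((u : E n) i) ^ 2 :=
      Finset.sum_congr rfl fun i _ => by rw [smul_eq_mul, mul_comm]
    rw [hc]
    simpa [smul_eq_mul] using heq


end Aux

/-- For `n ≥ 1` and positive reals `a₁,…,aₙ` with `∏ aᵢ = 1`, the integral
of `log (∑ aᵢ uᵢ²)` over the unit sphere (uniform probability measure) vanishes
if and only if `a₁ = ⋯ = aₙ = 1`. -/
theorem sphere_log_weighted_sum_integral_eq_zero_iff (n : ℕ) (hn : 1 ≤ n)
    (a : Fin n → ℝ) (ha : ∀ i, 0 < a i) (hprod : ∏ i, a i = 1) :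
    (∫ u : sphere (0 : EuclideanSpace ℝ (Fin n)) 1,
        Real.log (∑ i, a i * ((u : EuclideanSpace ℝ (Fin n)) i) ^ 2) ∂(uniSphere n)) = 0
      ↔ ∀ i, a i = 1 := by
  haveI := isProb hn
  constructor
  · intro hint
    -- definitions
    set f : (S n) → ℝ := fun u => Real.log (∑ i, a i * ((u : E n) i) ^ 2) with hf
    set g : (S n) → ℝ := fun u => ∑ i, ((u : E n) i) ^ 2 * Real.log (a i) with hg
    have hfpos : ∀ u : S n, 0 < ∑ i, a i * ((u : E n) i) ^ 2 := by
      intro u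
      obtain ⟨i, hi⟩ : ∃ i, (u : E n) i ≠ 0 := by
        by_contra hcon
        push_neg at hcon
        have := sum_sq_eq_one u
        simp [hcon] at this
      refine Finset.sum_pos' (fun j _ => mul_nonneg (ha j).le (sq_nonneg _)) ⟨i, Finset.mem_univ i, ?_⟩
      exact mul_pos (ha i) (by positivity)
    have hfc : Continuous f := by
      apply Continuous.log
      · exact continuous_finset_sum _ fun i _ => continuous_const.mul ((cont_coord i).pow 2)
      · exact fun u => (hfpos u).ne'
    have hgc : Continuous g :=
      continuous_finset_sum _ fun i _ => ((cont_coord i).pow 2).mul continuous_const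
    have hintf : Integrable f (uniSphere n) := integrable_cont hn hfc
    have hintg : Integrable g (uniSphere n) := integrable_cont hn hgc
    have hgint : (∫ u : S n, g u ∂(uniSphere n)) = 0 := by
      rw [hg]
      rw [integral_finset_sum _ (f := fun i (u : S n) => ((u : E n) i) ^ 2 * Real.log (a i)) (fun i _ =>
        integrable_cont hn (((cont_coord i).pow 2).mul continuous_const))]
      have : ∀ i : Fin n, (∫ u : S n, ((u : E n) i) ^ 2 * Real.log (a i) ∂(uniSphere n))
          = (1 / n) * Real.log (a i) := by
        intro i
        rw [integral_mul_const, integral_coord_sq hn i]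
      rw [Finset.sum_congr rfl fun i _ => this i, ← Finset.mul_sum,
        ← Real.log_prod (fun i _ => (ha i).ne'), hprod, Real.log_one, mul_zero]
    have hle : ∀ u : S n, g u ≤ f u := fun u => log_jensen a ha u
    have hsub : (∫ u : S n, (f u - g u) ∂(uniSphere n)) = 0 := by
      rw [integral_sub hintf hintg, hint, hgint, sub_zero]
    have hae : (fun u => f u - g u) =ᵐ[uniSphere n] 0 :=
      (integral_eq_zero_iff_of_nonneg (fun u => sub_nonneg.2 (hle u))
        (hintf.sub hintg)).1 hsub
    have hae2 : ∀ᵐ (u : S n) ∂(uniSphere n), ∀ i, Subtype.val u i ≠ 0 := by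
      rw [ae_all_iff]
      intro i
      rw [ae_iff]
      have h : {u : S n | ¬ Subtype.val u i ≠ 0} = {u : S n | (u : E n) i = 0} := by
        ext u; simp
      rw [h]
      exact uniSphere_coord_null i
    haveI : (ae (uniSphere n)).NeBot := ae_neBot.2 (IsProbabilityMeasure.ne_zero _)
    obtain ⟨u, hu1, hu2⟩ := (hae.and hae2).exists
    have heq : f u = g u := by
      have : f u - g u = 0 := hu1
      linarith
    have hall : ∀ j k, a j = a k := log_jensen_eq a ha u hu2 heq.le
    intro i
    set i0 : Fin n := ⟨0, hn⟩
    have hpow : a i0 ^ n = 1 := by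
      rw [← hprod, Finset.prod_congr rfl fun j _ => hall j i0, Finset.prod_const,
        Finset.card_univ, Fintype.card_fin]
    have h1 : a i0 = 1 := by
      rcases lt_trichotomy (a i0) 1 with h | h | h
      · exact absurd hpow (by nlinarith [pow_lt_one₀ (ha i0).le h (by omega : n ≠ 0)])
      · exact h
      · exact absurd hpow (by nlinarith [one_lt_pow₀ h (by omega : n ≠ 0)])
    rw [hall i i0, h1]
  · intro h1
    have : ∀ u : S n, Real.log (∑ i, a i * ((u : E n) i) ^ 2) = 0 := by
      intro u
      simp only [h1, one_mul]
      rw [sum_sq_eq_one u, Real.log_one]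
    simp only [this]
    exact integral_zero _ _
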